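/- If each A^k is a row-stochastic matrix whose positive entries are at least α > 0, and the associated thresholded graph sequence satisfies block strong connectivity with self-loops (Assumption: union of each block [μ_j, μ_{j+1}−1] strongly connected, self-loop at every node), then the product A^{μ_{l+n}−1} ⋯ A^{μ_l} over n consecutive blocks is entrywise positive with every entry at least α^{μ_{l+n} − μ_l}. -/

import Mathlib

/-!
Call an entry `(w, v)` of `matProd A a b` *good* if it is at least `α ^ (b - a)`. Since all
matrices are nonnegative, good entries compose along products, the self-loops make every
diagonal entry good, and an `α`-edge `v → w` at some time `t ∈ [a, b)` makes `(w, v)` good.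
Fix a target column `j` and let `S m` be the set of rows `w` such that `(w, j)` is good in the
product over the first `m` blocks. It always contains `j` and grows with `m`, and as long as it
is not everything, the strong connectivity of the next block yields an edge leaving it, whose
head joins `S (m + 1)`. Hence `S` is the whole vertex set after `n` blocks.
-/

/-- The ordered product `A^(b-1) * A^(b-2) * ⋯ * A^a` of a sequence of matrices. -/
def matProd {n : ℕ} (A : ℕ → Matrix (Fin n) (Fin n) ℝ) (a b : ℕ) :
    Matrix (Fin n) (Fin n) ℝ :=
  ((List.range (b - a)).map (fun t => A (b - 1 - t))).prod

theorem Relation.ReflTransGen.exists_rel_of_not {V : Type*} {r : V → V → Prop} {p : V → Prop}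
    {a b : V} (h : Relation.ReflTransGen r a b) (ha : p a) (hb : ¬ p b) :
    ∃ x y, p x ∧ ¬ p y ∧ r x y := by
  induction h with
  | refl => exact absurd ha hb
  | @tail c d _ hcd ih =>
    by_cases hc : p c
    · exact ⟨c, d, hc, hb, hcd⟩
    · exact ih hc

theorem Finset.eq_univ_of_exists_mem_succ_notMem {V : Type*} [Fintype V] [DecidableEq V]
    {S : ℕ → Finset V} (hmono : ∀ m, S m ⊆ S (m + 1))
    (hgrow : ∀ m, S m ≠ univ → ∃ w ∈ S (m + 1), w ∉ S m) :
    S (Fintype.card V) = univ := by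
  have hcard : ∀ m, min (Fintype.card V) m ≤ (S m).card := by
    intro m
    induction m with
    | zero => simp
    | succ m ih =>
      by_cases huniv : S m = univ
      · rw [show S (m + 1) = univ from univ_subset_iff.mp (huniv ▸ hmono m), card_univ]
        exact min_le_left _ _
      · obtain ⟨w, hw, hwm⟩ := hgrow m huniv
        have hlt : (S m).card < (S (m + 1)).card :=
          card_lt_card ((ssubset_iff_of_subset (hmono m)).mpr ⟨w, hw, hwm⟩)
        omega
  exact eq_univ_of_card _ (le_antisymm (card_le_univ _) (by simpa using hcard (Fintype.card V)))

theorem Matrix.mul_apply_le_of_nonneg {ι R : Type*} [Fintype ι] [CommSemiring R] [PartialOrder R]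
    [IsOrderedRing R] {M N : Matrix ι ι R} (hM : ∀ i j, 0 ≤ M i j) (hN : ∀ i j, 0 ≤ N i j)
    (i k j : ι) : M i k * N k j ≤ (M * N) i j := by
  rw [Matrix.mul_apply]
  exact Finset.single_le_sum (f := fun x => M i x * N x j)
    (fun x _ => mul_nonneg (hM i x) (hN x j)) (Finset.mem_univ k)

section matProd

variable {n : ℕ} (A : ℕ → Matrix (Fin n) (Fin n) ℝ)

@[simp]
theorem matProd_self (a : ℕ) : matProd A a a = 1 := by simp [matProd]

theorem matProd_succ {a b : ℕ} (h : a ≤ b) : matProd A a (b + 1) = A b * matProd A a b := by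
  unfold matProd
  rw [show b + 1 - a = b - a + 1 by omega, List.range_succ_eq_map, List.map_cons,
    List.prod_cons, List.map_map]
  refine congrArg₂ (· * ·) (by congr 1) (congrArg _ (List.map_congr_left fun t _ => ?_))
  simp only [Function.comp]
  congr 1
  omega

theorem matProd_mul {a b c : ℕ} (hab : a ≤ b) (hbc : b ≤ c) :
    matProd A b c * matProd A a b = matProd A a c := by
  induction c, hbc using Nat.le_induction with
  | base => rw [matProd_self, one_mul]
  | succ c hbc ih =>
    rw [matProd_succ A (hab.trans hbc), matProd_succ A hbc, ← ih, Matrix.mul_assoc]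

theorem pow_le_matProd_single {α : ℝ} {t : ℕ} {v w : Fin n} (h : α ≤ A t w v) :
    α ^ (t + 1 - t) ≤ matProd A t (t + 1) w v := by
  simpa [matProd_succ A le_rfl] using h

variable {A}

theorem matProd_nonneg (hA : ∀ k i j, 0 ≤ A k i j) {a b : ℕ} (hab : a ≤ b) (i j : Fin n) :
    0 ≤ matProd A a b i j := by
  induction b, hab using Nat.le_induction generalizing i with
  | base => simpa using Matrix.zero_le_one_elem i j
  | succ b hab ih =>
    rw [matProd_succ A hab, Matrix.mul_apply]
    exact Finset.sum_nonneg fun x _ => mul_nonneg (hA b i x) (ih x)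

theorem pow_le_matProd_trans (hA : ∀ k i j, 0 ≤ A k i j) {α : ℝ} (hα : 0 ≤ α) {a b c : ℕ}
    (hab : a ≤ b) (hbc : b ≤ c) {u v w : Fin n}
    (hvu : α ^ (b - a) ≤ matProd A a b u v) (huw : α ^ (c - b) ≤ matProd A b c w u) :
    α ^ (c - a) ≤ matProd A a c w v :=
  calc α ^ (c - a) = α ^ (c - b) * α ^ (b - a) := by rw [← pow_add]; congr 1; omega
    _ ≤ matProd A b c w u * matProd A a b u v :=
        mul_le_mul huw hvu (pow_nonneg hα _) ((pow_nonneg hα _).trans huw)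
    _ ≤ (matProd A b c * matProd A a b) w v :=
        Matrix.mul_apply_le_of_nonneg (matProd_nonneg hA hbc) (matProd_nonneg hA hab) w u v
    _ = matProd A a c w v := by rw [matProd_mul A hab hbc]

theorem pow_le_matProd_diag (hA : ∀ k i j, 0 ≤ A k i j) {α : ℝ} (hα : 0 ≤ α)
    (hself : ∀ k i, α ≤ A k i i) {a b : ℕ} (hab : a ≤ b) (v : Fin n) :
    α ^ (b - a) ≤ matProd A a b v v := by
  induction b, hab using Nat.le_induction with
  | base => simp
  | succ b hab ih =>
    exact pow_le_matProd_trans hA hα hab (b.le_add_right 1) ih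
      (pow_le_matProd_single A (hself b v))

theorem pow_le_matProd_of_edge (hA : ∀ k i j, 0 ≤ A k i j) {α : ℝ} (hα : 0 ≤ α)
    (hself : ∀ k i, α ≤ A k i i) {a t b : ℕ} (hat : a ≤ t) (htb : t < b) {v w : Fin n}
    (h : α ≤ A t w v) : α ^ (b - a) ≤ matProd A a b w v :=
  pow_le_matProd_trans hA hα (hat.trans (t.le_add_right 1)) htb
    (pow_le_matProd_trans hA hα hat (t.le_add_right 1) (pow_le_matProd_diag hA hα hself hat v)
      (pow_le_matProd_single A h))
    (pow_le_matProd_diag hA hα hself htb w)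

end matProd

theorem stmt17_general {n : ℕ} (α : ℝ) (hα0 : 0 < α)
    (A : ℕ → Matrix (Fin n) (Fin n) ℝ)
    (hApos : ∀ k i j, 0 ≤ A k i j)
    (hself : ∀ k i, α ≤ A k i i)
    (b : ℕ → ℕ)
    (μ : ℕ → ℕ) (hμ : ∀ k, μ (k + 1) = μ k + b (k + 1))
    (hconn : ∀ k, ∀ i j : Fin n,
      Relation.ReflTransGen (fun a c => ∃ t, μ k ≤ t ∧ t < μ (k + 1) ∧ α ≤ A t c a) i j) :
    ∀ l : ℕ, ∀ i j : Fin n,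
      α ^ (μ (l + n) - μ l) ≤ matProd A (μ l) (μ (l + n)) i j := by
  intro l i j
  have hμmono : Monotone μ := monotone_nat_of_le_succ fun k => (hμ k).symm ▸ Nat.le_add_right _ _
  let S : ℕ → Finset (Fin n) := fun m =>
    {w | α ^ (μ (l + m) - μ l) ≤ matProd A (μ l) (μ (l + m)) w j}
  have hle (m) : μ l ≤ μ (l + m) := hμmono (by omega)
  have hstep (m) : μ (l + m) ≤ μ (l + (m + 1)) := hμmono (by omega)
  have hdiag {a c : ℕ} (h : a ≤ c) (v : Fin n) : α ^ (c - a) ≤ matProd A a c v v :=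
    pow_le_matProd_diag hApos hα0.le hself h v
  have hmono (m) : S m ⊆ S (m + 1) := fun w hw => by
    simp only [S, Finset.mem_filter_univ] at hw ⊢
    exact pow_le_matProd_trans hApos hα0.le (hle m) (hstep m) hw (hdiag (hstep m) w)
  have hgrow (m) (hm : S m ≠ Finset.univ) : ∃ w ∈ S (m + 1), w ∉ S m := by
    obtain ⟨j₀, hj₀⟩ : ∃ j₀, j₀ ∉ S m := by simpa [Finset.eq_univ_iff_forall] using hm
    have hj : j ∈ S m := by simpa [S] using hdiag (hle m) j
    obtain ⟨v, w, hv, hw, t, ht₁, ht₂, hvw⟩ := (hconn (l + m) j j₀).exists_rel_of_not hj hj₀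
    refine ⟨w, ?_, hw⟩
    simp only [S, Finset.mem_filter_univ] at hv ⊢
    exact pow_le_matProd_trans hApos hα0.le (hle m) (hstep m) hv
      (pow_le_matProd_of_edge hApos hα0.le hself ht₁ ht₂ hvw)
  have hfull : S n = Finset.univ := by
    simpa using Finset.eq_univ_of_exists_mem_succ_notMem hmono hgrow
  have hi : i ∈ S n := hfull ▸ Finset.mem_univ i
  simpa [S] using hi

/-- For row-stochastic matrices whose positive entries are at least `α` and whose
thresholded graphs satisfy block strong connectivity with self-loops, the product
over `n` consecutive blocks is entrywise at least `α^(μ (l+n) - μ l)`. -/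
theorem stmt17 {n : ℕ} (hn : 0 < n) (α : ℝ) (hα0 : 0 < α) (hα1 : α < 1)
    (A : ℕ → Matrix (Fin n) (Fin n) ℝ)
    (hApos : ∀ k i j, 0 ≤ A k i j) (hArow : ∀ k i, ∑ j, A k i j = 1)
    (hAα : ∀ k i j, 0 < A k i j → α ≤ A k i j)
    (hself : ∀ k i, α ≤ A k i i)
    (b : ℕ → ℕ) (hb : ∀ k, 0 < b k)
    (μ : ℕ → ℕ) (hμ0 : μ 0 = 0) (hμ : ∀ k, μ (k + 1) = μ k + b (k + 1))
    (hconn : ∀ k, ∀ i j : Fin n,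
      Relation.ReflTransGen (fun a c => ∃ t, μ k ≤ t ∧ t < μ (k + 1) ∧ α ≤ A t c a) i j) :
    ∀ l : ℕ, ∀ i j : Fin n,
      α ^ (μ (l + n) - μ l) ≤ matProd A (μ l) (μ (l + n)) i j :=
  stmt17_general α hα0 A hApos hself b μ hμ hconn
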